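/- arXiv:1709.07392 — 3 statements merged into one kernel-verified Lean document; each statement's English description precedes it below -/
import Mathlib

section
/- With all quantities the explicit formal power series in q defined in the context, the following identity holds in ℚ[[q]]: −5·L³·G = 25/144 − (625/288)v₁ + (25/24)v₁² − (5/24)v₁³ − (625/36)v₂ + (25/6)v₁v₂ + (350/9)v₃ − (5759/3600)X − (167/720)v₁X + (1/6)v₁²X − (475/12)v₂X + (41/3600)X² − (13/288)v₁X² + (1/240)X³, where G := (70/9)𝒳₃ + (575/18)𝒳𝒳₂ + (5/6)𝒴𝒳₂ + (557/72)𝒳³ − (629/72)𝒴𝒳² − (23/24)𝒴²𝒳 − (1/24)𝒴³ + (625/36)𝒵𝒳₂ − (175/9)𝒵𝒴𝒳 + (1441/48)𝒵₂𝒳 − (25/24)𝒵(𝒳² + 𝒴²) − (3125/288)𝒵²(𝒳 + 𝒴) + (41/48)𝒵₂𝒴 − (625/144)𝒵³ + (2233/128)𝒵𝒵₂ + (547/72)𝒵₃. (This identity is the precise content of the paper's proposition that the genus-two mirror conjecture of Bershadsky–Cecotti–Ooguri–Vafa, in the Yamaguchi–Yau/Huang–Klemm–Quackenbush formulation, is equivalent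 to the paper's Conjecture 1.1.) -/
/-!
The operator `q·d/dq` is a derivation of `ℚ⟦q⟧` (namely `q • d/dq`), and each ingredient of the
identity satisfies a closed first-order equation under it: `L⁵(1 - 5⁵q) = 1` gives
`q L' = -(X/5) L`, the series `X` satisfies the Riccati equation `q X' = X - X²`, and
`q B_p' = B₁ B_p - B_{p+1}`. Consequently `𝒳₁, 𝒴₁, 𝒵₁` are `L⁻¹` times polynomials in
`X, B₁, A₁`, and `d/du = L⁻¹ q d/dq` keeps the higher generators polynomial in
`L⁻¹, X, B₁, B₂, B₃`. Both sides of the identity then become the same rational function of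
`L, X, A₁, B₁, B₂, B₃`, which is checked in the fraction field of `ℚ⟦q⟧`.
-/

noncomputable section

/-- The operator `q·d/dq` on formal power series in `q`. -/
def qd (f : PowerSeries ℚ) : PowerSeries ℚ :=
  PowerSeries.mk fun n => (n : ℚ) * PowerSeries.coeff n f

/-- `I₀(q) = Σ_{d≥0} ((5d)!/(d!)⁵) q^d`. -/
def I0 : PowerSeries ℚ :=
  PowerSeries.mk fun d => (Nat.factorial (5 * d) : ℚ) / ((Nat.factorial d : ℚ)) ^ 5

/-- `I₁(q) = Σ_{d≥1} ((5d)!/(d!)⁵)(5 Σ_{j=d+1}^{5d} 1/j) q^d`. -/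
def I1 : PowerSeries ℚ :=
  PowerSeries.mk fun d =>
    (Nat.factorial (5 * d) : ℚ) / ((Nat.factorial d : ℚ)) ^ 5 *
      (5 * ∑ j ∈ Finset.Icc (d + 1) (5 * d), (1 : ℚ) / j)

/-- `I_{1,1} = 1 + q·d/dq (I₁/I₀)`. -/
def I11 : PowerSeries ℚ := 1 + qd (I1 * I0⁻¹)

/-- The operator `d/du = (1/L)·q·d/dq`. -/
def du (L f : PowerSeries ℚ) : PowerSeries ℚ := L⁻¹ * qd f

/-- The generators `𝒳_k`: `𝒳₁ = (d/du) log(I₀/L)` and `𝒳_{k+1} = (d/du) 𝒳_k`. -/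
def Xg (L : PowerSeries ℚ) : ℕ → PowerSeries ℚ
  | 0 => 0
  | 1 => L⁻¹ * (qd I0 * I0⁻¹ - qd L * L⁻¹)
  | (k + 2) => du L (Xg L (k + 1))

/-- The generators `𝒴_k`: `𝒴₁ = (d/du) log(I₀·I_{1,1}/L²)` and `𝒴_{k+1} = (d/du) 𝒴_k`. -/
def Yg (L : PowerSeries ℚ) : ℕ → PowerSeries ℚ
  | 0 => 0
  | 1 => L⁻¹ * (qd I0 * I0⁻¹ + qd I11 * I11⁻¹ - 2 * (qd L * L⁻¹))
  | (k + 2) => du L (Yg L (k + 1))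

/-- The generators `𝒵_k`: `𝒵₁ = (d/du) log(q^{1/5}·L)` and `𝒵_{k+1} = (d/du) 𝒵_k`. -/
def Zg (L : PowerSeries ℚ) : ℕ → PowerSeries ℚ
  | 0 => 0
  | 1 => L⁻¹ * (qd L * L⁻¹ + PowerSeries.C (1 / 5 : ℚ))
  | (k + 2) => du L (Zg L (k + 1))


/-- The operator `-q·d/dq`. -/
def nqd (f : PowerSeries ℚ) : PowerSeries ℚ := -(qd f)

/-- `B_p = ((-q·d/dq)^p I₀)/I₀`. -/
def Bp (p : ℕ) : PowerSeries ℚ := nqd^[p] I0 * I0⁻¹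

/-- `X = -5⁵q/(1 - 5⁵q)`. -/
def Xser : PowerSeries ℚ :=
  -(5 ^ 5) * PowerSeries.X * (1 - 5 ^ 5 * PowerSeries.X)⁻¹

/-- `v₁ = A₁ + 1 + 2B₁`, as a function of `A₁`. -/
def v1 (A1 : PowerSeries ℚ) : PowerSeries ℚ := A1 + 1 + 2 * Bp 1

/-- `v₂ = -A₁B₁ - 2B₁² - B₁ + B₂`. -/
def v2 (A1 : PowerSeries ℚ) : PowerSeries ℚ :=
  -A1 * Bp 1 - 2 * (Bp 1) ^ 2 - Bp 1 + Bp 2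

/-- `v₃ = -A₁B₁² - B₁A₁X - 2B₁³ - 2B₁²X - B₁² + B₁B₂ - (3/5)B₁X + B₃`. -/
def v3 (A1 : PowerSeries ℚ) : PowerSeries ℚ :=
  -A1 * (Bp 1) ^ 2 - Bp 1 * A1 * Xser - 2 * (Bp 1) ^ 3 - 2 * (Bp 1) ^ 2 * Xser
    - (Bp 1) ^ 2 + Bp 1 * Bp 2 - PowerSeries.C (3 / 5 : ℚ) * Bp 1 * Xser + Bp 3

/-- The degree-three combination `G` of the basic generators appearing in the genus-two
mirror formula of Conjecture 1.1. -/
def G (L : PowerSeries ℚ) : PowerSeries ℚ :=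
  PowerSeries.C (70 / 9 : ℚ) * Xg L 3
    + PowerSeries.C (575 / 18 : ℚ) * Xg L 1 * Xg L 2
    + PowerSeries.C (5 / 6 : ℚ) * Yg L 1 * Xg L 2
    + PowerSeries.C (557 / 72 : ℚ) * (Xg L 1) ^ 3
    - PowerSeries.C (629 / 72 : ℚ) * Yg L 1 * (Xg L 1) ^ 2
    - PowerSeries.C (23 / 24 : ℚ) * (Yg L 1) ^ 2 * Xg L 1
    - PowerSeries.C (1 / 24 : ℚ) * (Yg L 1) ^ 3
    + PowerSeries.C (625 / 36 : ℚ) * Zg L 1 * Xg L 2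
    - PowerSeries.C (175 / 9 : ℚ) * Zg L 1 * Yg L 1 * Xg L 1
    + PowerSeries.C (1441 / 48 : ℚ) * Zg L 2 * Xg L 1
    - PowerSeries.C (25 / 24 : ℚ) * Zg L 1 * ((Xg L 1) ^ 2 + (Yg L 1) ^ 2)
    - PowerSeries.C (3125 / 288 : ℚ) * (Zg L 1) ^ 2 * (Xg L 1 + Yg L 1)
    + PowerSeries.C (41 / 48 : ℚ) * Zg L 2 * Yg L 1
    - PowerSeries.C (625 / 144 : ℚ) * (Zg L 1) ^ 3
    + PowerSeries.C (2233 / 128 : ℚ) * Zg L 1 * Zg L 2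
    + PowerSeries.C (547 / 72 : ℚ) * Zg L 3

open PowerSeries

def qDerivation : Derivation ℚ ℚ⟦X⟧ ℚ⟦X⟧ := (X : ℚ⟦X⟧) • d⁄dX ℚ

lemma qDerivation_apply (f : ℚ⟦X⟧) : qDerivation f = qd f := by
  ext (_ | n)
  · simp [qDerivation, qd]
  · simp [qDerivation, qd, coeff_derivative, mul_comm]

lemma qd_add (f g : ℚ⟦X⟧) : qd (f + g) = qd f + qd g := by
  simp only [← qDerivation_apply, map_add]

lemma qd_sub (f g : ℚ⟦X⟧) : qd (f - g) = qd f - qd g := by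
  simp only [← qDerivation_apply, map_sub]

lemma qd_neg (f : ℚ⟦X⟧) : qd (-f) = -qd f := by
  simp only [← qDerivation_apply, map_neg]

lemma qd_mul (f g : ℚ⟦X⟧) : qd (f * g) = qd f * g + f * qd g := by
  simp only [← qDerivation_apply, Derivation.leibniz, smul_eq_mul]
  ring

lemma qd_C (r : ℚ) : qd (C r) = 0 := by
  rw [← qDerivation_apply, ← algebraMap_eq, Derivation.map_algebraMap]

lemma qd_zero : qd 0 = 0 := by
  simpa using qd_C 0

lemma qd_one : qd 1 = 0 := by
  simpa using qd_C 1

lemma qd_ofNat (n : ℕ) [n.AtLeastTwo] : qd (no_index (OfNat.ofNat n : ℚ⟦X⟧)) = 0 := by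
  simpa only [map_ofNat] using qd_C (OfNat.ofNat n)

lemma qd_pow (f : ℚ⟦X⟧) (n : ℕ) : qd (f ^ n) = n * f ^ (n - 1) * qd f := by
  simp only [← qDerivation_apply, Derivation.leibniz_pow, nsmul_eq_mul, smul_eq_mul]
  ring

lemma qd_X : qd (X : ℚ⟦X⟧) = X := by
  simp [← qDerivation_apply, qDerivation]

lemma qd_inv (f : ℚ⟦X⟧) : qd f⁻¹ = -(f⁻¹ ^ 2 * qd f) := by
  simp [← qDerivation_apply, qDerivation, derivative_inv', mul_left_comm]

lemma qd_iterate_nqd_mul_inv (f : ℚ⟦X⟧) (p : ℕ) :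
    qd (nqd^[p] f * f⁻¹) = nqd f * f⁻¹ * (nqd^[p] f * f⁻¹) - nqd^[p + 1] f * f⁻¹ := by
  rw [qd_mul, qd_inv, Function.iterate_succ_apply', nqd, nqd]
  ring

lemma qd_Bp (p : ℕ) : qd (Bp p) = Bp 1 * Bp p - Bp (p + 1) := by
  simpa [Bp] using qd_iterate_nqd_mul_inv I0 p

lemma qd_Xser : qd Xser = Xser - Xser ^ 2 := by
  simp only [Xser, qd_mul, qd_inv, qd_sub, qd_one, qd_X, qd_ofNat, qd_neg, qd_pow]
  ring

lemma qd_one_sub_five_pow_five_mul_X : qd (1 - 5 ^ 5 * X) = Xser * (1 - 5 ^ 5 * X) := by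
  have hU : (1 - 5 ^ 5 * X : ℚ⟦X⟧) * (1 - 5 ^ 5 * X)⁻¹ = 1 :=
    PowerSeries.mul_inv_cancel _ (by simp)
  simp only [Xser, qd_sub, qd_one, qd_mul, qd_pow, qd_ofNat, qd_X]
  linear_combination ((5 : ℚ⟦X⟧) ^ 5 * X) * hU

lemma constantCoeff_I11 : constantCoeff I11 = 1 := by
  simp [I11, qd]

lemma qd_I11 {A1 : ℚ⟦X⟧} (hA1 : A1 * (X * I11) = nqd (X * I11)) :
    qd I11 = -((A1 + 1) * I11) := by
  rw [nqd, qd_mul, qd_X] at hA1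
  apply mul_left_cancel₀ (X_ne_zero : (X : ℚ⟦X⟧) ≠ 0)
  linear_combination hA1

section PowFiveMulEqOne

variable {L : ℚ⟦X⟧}

lemma mul_inv_cancel_of_pow_five_mul (hL : L ^ 5 * (1 - 5 ^ 5 * X) = 1) :
    L * L⁻¹ = 1 := by
  have hunit : IsUnit L :=
    IsUnit.of_mul_eq_one (L ^ 4 * (1 - 5 ^ 5 * X)) (by linear_combination hL)
  exact PowerSeries.mul_inv_cancel L (hunit.map constantCoeff).ne_zero

lemma qd_eq_of_pow_five_mul (hL : L ^ 5 * (1 - 5 ^ 5 * X) = 1) :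
    qd L = -(C (1 / 5) * Xser * L) := by
  have h := congrArg qd hL
  rw [qd_mul, qd_pow, qd_one_sub_five_pow_five_mul_X, qd_one] at h
  have hLU : L ^ 4 * (1 - 5 ^ 5 * X) ≠ 0 :=
    right_ne_zero_of_mul_eq_one (a := L) (by linear_combination hL)
  have h5 : 5 * qd L = -(Xser * L) := by
    apply mul_left_cancel₀ hLU
    linear_combination h
  have hc : (5 : ℚ⟦X⟧) * C (1 / 5) = 1 := by
    rw [← map_ofNat C, ← map_mul]; norm_num
  linear_combination C (1 / 5) * h5 - qd L * hc

lemma qd_inv_eq_of_pow_five_mul (hL : L ^ 5 * (1 - 5 ^ 5 * X) = 1) :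
    qd L⁻¹ = C (1 / 5) * Xser * L⁻¹ := by
  rw [qd_inv, qd_eq_of_pow_five_mul hL]
  linear_combination (C (1 / 5) * Xser * L⁻¹) * mul_inv_cancel_of_pow_five_mul hL

lemma Xg_one_eq (hL : L ^ 5 * (1 - 5 ^ 5 * X) = 1) :
    Xg L 1 = L⁻¹ * (C (1 / 5) * Xser - Bp 1) := by
  simp only [Xg, Bp, Function.iterate_one, nqd, qd_eq_of_pow_five_mul hL]
  linear_combination (C (1 / 5) * Xser * L⁻¹) * mul_inv_cancel_of_pow_five_mul hL

lemma Yg_one_eq (hL : L ^ 5 * (1 - 5 ^ 5 * X) = 1) {A1 : ℚ⟦X⟧}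
    (hA1 : A1 * (X * I11) = nqd (X * I11)) :
    Yg L 1 = L⁻¹ * (2 * C (1 / 5) * Xser - Bp 1 - A1 - 1) := by
  have hI11 : I11 * I11⁻¹ = 1 := PowerSeries.mul_inv_cancel _ (by simp [constantCoeff_I11])
  simp only [Yg, Bp, Function.iterate_one, nqd, qd_eq_of_pow_five_mul hL, qd_I11 hA1]
  linear_combination (2 * (C (1 / 5) * Xser * L⁻¹)) * mul_inv_cancel_of_pow_five_mul hL
    - (L⁻¹ * (A1 + 1)) * hI11

lemma Zg_one_eq (hL : L ^ 5 * (1 - 5 ^ 5 * X) = 1) :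
    Zg L 1 = L⁻¹ * (C (1 / 5) * (1 - Xser)) := by
  simp only [Zg, qd_eq_of_pow_five_mul hL]
  linear_combination (-(C (1 / 5) * Xser * L⁻¹)) * mul_inv_cancel_of_pow_five_mul hL

end PowFiveMulEqOne

lemma algebraMap_C {K : Type*} [Field K] [Algebra ℚ⟦X⟧ K] (r : ℚ) :
    algebraMap ℚ⟦X⟧ K (C r) = r :=
  eq_ratCast ((algebraMap ℚ⟦X⟧ K).comp C) r

theorem statement0_general (L : PowerSeries ℚ)
    (hL : L ^ 5 * (1 - 5 ^ 5 * PowerSeries.X) = 1)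
    (A1 : PowerSeries ℚ)
    (hA1 : A1 * (PowerSeries.X * I11) = nqd (PowerSeries.X * I11)) :
    -5 * L ^ 3 * G L =
      PowerSeries.C (25 / 144 : ℚ)
        - PowerSeries.C (625 / 288 : ℚ) * v1 A1
        + PowerSeries.C (25 / 24 : ℚ) * (v1 A1) ^ 2
        - PowerSeries.C (5 / 24 : ℚ) * (v1 A1) ^ 3
        - PowerSeries.C (625 / 36 : ℚ) * v2 A1
        + PowerSeries.C (25 / 6 : ℚ) * v1 A1 * v2 A1
        + PowerSeries.C (350 / 9 : ℚ) * v3 A1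
        - PowerSeries.C (5759 / 3600 : ℚ) * Xser
        - PowerSeries.C (167 / 720 : ℚ) * v1 A1 * Xser
        + PowerSeries.C (1 / 6 : ℚ) * (v1 A1) ^ 2 * Xser
        - PowerSeries.C (475 / 12 : ℚ) * v2 A1 * Xser
        + PowerSeries.C (41 / 3600 : ℚ) * Xser ^ 2
        - PowerSeries.C (13 / 288 : ℚ) * v1 A1 * Xser ^ 2
        + PowerSeries.C (1 / 240 : ℚ) * Xser ^ 3 := by
  have hXg (k : ℕ) : Xg L (k + 2) = L⁻¹ * qd (Xg L (k + 1)) := rfl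
  have hZg (k : ℕ) : Zg L (k + 2) = L⁻¹ * qd (Zg L (k + 1)) := rfl
  simp only [G, v1, v2, v3, hXg, hZg, Xg_one_eq hL, Yg_one_eq hL hA1, Zg_one_eq hL,
    qd_add, qd_sub, qd_mul, qd_pow, qd_zero, qd_one, qd_C, qd_inv_eq_of_pow_five_mul hL, qd_Xser,
    qd_Bp]
  -- `ring` cannot combine the constants `C r` in `ℚ⟦X⟧`; in the fraction field they become `r`.
  apply IsFractionRing.injective ℚ⟦X⟧ (LaurentSeries ℚ)
  have : CharZero (LaurentSeries ℚ) := charZero_of_injective_algebraMap (algebraMap ℚ _).injective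
  have hLinv := congrArg (algebraMap ℚ⟦X⟧ (LaurentSeries ℚ)) (mul_inv_cancel_of_pow_five_mul hL)
  simp only [map_add, map_sub, map_mul, map_neg, map_pow, map_ofNat, map_natCast, map_zero,
    map_one, algebraMap_C] at hLinv ⊢
  have hL0 : algebraMap ℚ⟦X⟧ (LaurentSeries ℚ) L ≠ 0 := left_ne_zero_of_mul_eq_one hLinv
  rw [eq_inv_of_mul_eq_one_right hLinv]
  field_simp
  ring

/-- The identity in `ℚ[[q]]` expressing the equivalence between the
Yamaguchi–Yau/Huang–Klemm–Quackenbush form of the genus-two mirror conjecture and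
Conjecture 1.1 of the paper:
`-5·L³·G = 25/144 - (625/288)v₁ + (25/24)v₁² - (5/24)v₁³ - (625/36)v₂ + (25/6)v₁v₂
  + (350/9)v₃ - (5759/3600)X - (167/720)v₁X + (1/6)v₁²X - (475/12)v₂X + (41/3600)X²
  - (13/288)v₁X² + (1/240)X³`,
where `A₁` is the power series with `A₁·(q·I_{1,1}) = (-q·d/dq)(q·I_{1,1})`. -/
theorem statement0 (L : PowerSeries ℚ)
    (hc : PowerSeries.constantCoeff L = 1)
    (hL : L ^ 5 * (1 - 5 ^ 5 * PowerSeries.X) = 1)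
    (A1 : PowerSeries ℚ)
    (hA1 : A1 * (PowerSeries.X * I11) = nqd (PowerSeries.X * I11)) :
    -5 * L ^ 3 * G L =
      PowerSeries.C (25 / 144 : ℚ)
        - PowerSeries.C (625 / 288 : ℚ) * v1 A1
        + PowerSeries.C (25 / 24 : ℚ) * (v1 A1) ^ 2
        - PowerSeries.C (5 / 24 : ℚ) * (v1 A1) ^ 3
        - PowerSeries.C (625 / 36 : ℚ) * v2 A1
        + PowerSeries.C (25 / 6 : ℚ) * v1 A1 * v2 A1
        + PowerSeries.C (350 / 9 : ℚ) * v3 A1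
        - PowerSeries.C (5759 / 3600 : ℚ) * Xser
        - PowerSeries.C (167 / 720 : ℚ) * v1 A1 * Xser
        + PowerSeries.C (1 / 6 : ℚ) * (v1 A1) ^ 2 * Xser
        - PowerSeries.C (475 / 12 : ℚ) * v2 A1 * Xser
        + PowerSeries.C (41 / 3600 : ℚ) * Xser ^ 2
        - PowerSeries.C (13 / 288 : ℚ) * v1 A1 * Xser ^ 2
        + PowerSeries.C (1 / 240 : ℚ) * Xser ^ 3 :=
  statement0_general L hL A1 hA1

end
end

section
/- The following identity of formal power series in ℚ[[q]] holds: 𝒳₄ = −4𝒳𝒳₃ − 3𝒳₂² − 6𝒳²𝒳₂ − 𝒳⁴ − (15/4)(𝒵₂𝒳² + 𝒵₂𝒳₂ + 𝒵₃𝒳) − (23/24)𝒵₄ + (29/9)𝒵₁²𝒵₂ − (65/72)𝒵₁𝒵₃ − (3/4)𝒵₂². (Second Yamaguchi–Yau identity among the basic generators.) -/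
noncomputable section

/-!
Write `θ = 5 q d/dq`, `υ = 5 d/du = L⁻¹ θ` and `g = I₀ / L`. Then `υ g = 5 𝒳 g` and, from
`L⁵ (1 - 5⁵ q) = 1`, `υ L = L⁵ - 1`; so `𝒳₄ + 4𝒳𝒳₃ + 3𝒳₂² + 6𝒳²𝒳₂ + 𝒳⁴ = (d/du)⁴ g / g`, and since
`𝒵₁ = L⁴ / 5` every `𝒵_k` is a polynomial in `L`. The Picard–Fuchs equation
`θ⁴ I₀ = 5⁵ q (θ + 1)(θ + 2)(θ + 3)(θ + 4) I₀`, rewritten through `θ = L υ`, `I₀ = L g` and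
`5⁵ q L⁵ = L⁵ - 1`, is a fourth-order linear equation for `g` in `υ` with coefficients polynomial
in `L`. Dividing it by `g` and writing these coefficients through the `𝒵_k` gives the identity.
-/

open PowerSeries

namespace Derivation

variable {R A : Type*} [CommRing R] [CommRing A] [Algebra R A]

@[simp]
theorem map_ofNat (D : Derivation R A A) (n : ℕ) [n.AtLeastTwo] :
    D (no_index (OfNat.ofNat n : A)) = 0 := by
  rw [← Nat.cast_ofNat]
  exact D.map_natCast n

theorem iterate_two_eq_mul_of_apply_eq_mul (δ : Derivation R A A) {g x : A} (h : δ g = g * x) :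
    δ^[2] g = g * (δ x + x ^ 2) := by
  simp only [Function.iterate_succ_apply', Function.iterate_zero_apply, h, leibniz, smul_eq_mul]
  ring

theorem iterate_four_eq_mul_of_apply_eq_mul (δ : Derivation R A A) {g x : A} (h : δ g = g * x) :
    δ^[4] g = g * (δ^[3] x + 4 * x * δ^[2] x + 3 * δ x ^ 2 + 6 * x ^ 2 * δ x + x ^ 4) := by
  simp only [Function.iterate_succ_apply', Function.iterate_zero_apply, h, leibniz, smul_eq_mul,
    map_add]
  ring

/-- For `I = L g`, the left side is `L⁵ (θ⁴ - 5⁵ q (θ + 1)(θ + 2)(θ + 3)(θ + 4)) I` rewritten with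
`5⁵ q L⁵ = L⁵ - 1`. -/
theorem picardFuchs_change_of_variables (θ υ : Derivation R A A) {L g : A} (hθ : θ = L • υ)
    (hL : υ L = L ^ 5 - 1) :
    θ^[4] (L * g) - (L ^ 5 - 1) *
        (10 * θ^[3] (L * g) + 35 * θ^[2] (L * g) + 50 * θ (L * g) + 24 * (L * g)) =
      L ^ 5 * (υ^[4] g + 15 * L ^ 3 * (L ^ 5 - 1) * υ^[2] g
        + 15 * L ^ 2 * (3 - 11 * L ^ 5 + 8 * L ^ 10) * υ g
        + (-23 * L + 341 * L ^ 6 - 714 * L ^ 11 + 396 * L ^ 16) * g) := by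
  subst hθ
  simp only [Function.iterate_succ_apply', Function.iterate_zero_apply, smul_apply, smul_eq_mul,
    leibniz, leibniz_pow, map_add, map_sub, map_zero, nsmul_eq_mul, hL, map_one_eq_zero,
    map_natCast]
  ring

end Derivation

/-- `theta = 5 q d/dq`, and `uDeriv L = 5 d/du` below; the factor `5` keeps the Picard–Fuchs
equation and `uDeriv L L = L⁵ - 1` integral. -/
def theta : Derivation ℚ ℚ⟦X⟧ ℚ⟦X⟧ := (5 * X : ℚ⟦X⟧) • d⁄dX ℚ

theorem coeff_theta (f : ℚ⟦X⟧) (n : ℕ) : coeff n (theta f) = 5 * n * coeff n f := by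
  rw [theta, Derivation.smul_apply, smul_eq_mul, ← map_ofNat C 5, mul_assoc, coeff_C_mul]
  rcases n with _ | n
  · simp
  · rw [coeff_succ_X_mul, coeff_derivative]
    push_cast
    ring

theorem theta_apply (f : ℚ⟦X⟧) : theta f = 5 * qd f := by
  ext n
  rw [coeff_theta, ← map_ofNat C 5, coeff_C_mul, qd, coeff_mk, mul_assoc]

theorem theta_X : theta X = 5 * X := by
  simp [theta]

theorem theta_inv (f : ℚ⟦X⟧) : theta f⁻¹ = -f⁻¹ ^ 2 * theta f := by
  simp only [theta, Derivation.smul_apply, smul_eq_mul, derivative_inv']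
  ring

theorem coeff_iterate_theta (f : ℚ⟦X⟧) (n k : ℕ) :
    coeff n (theta^[k] f) = (5 * n) ^ k * coeff n f := by
  induction k with
  | zero => simp
  | succ k ih => rw [Function.iterate_succ_apply', coeff_theta, ih, pow_succ]; ring

theorem coeff_I0_succ (n : ℕ) :
    ((n : ℚ) + 1) ^ 4 * coeff (n + 1) I0 =
      5 * ((5 * n + 1) * (5 * n + 2) * (5 * n + 3) * (5 * n + 4)) * coeff n I0 := by
  simp only [I0, coeff_mk, Nat.factorial_succ, show 5 * (n + 1) = 5 * n + 4 + 1 by ring]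
  push_cast
  field_simp
  ring

theorem I0_picardFuchs :
    theta^[4] I0 = 5 ^ 5 * X * (theta^[4] I0 + 10 * theta^[3] I0 + 35 * theta^[2] I0
      + 50 * theta I0 + 24 * I0) := by
  ext (_ | n)
  · rw [mul_comm _ X, mul_assoc, coeff_zero_X_mul, coeff_iterate_theta]
    simp
  · rw [mul_comm _ X, mul_assoc, coeff_succ_X_mul, ← map_ofNat C, ← map_pow, coeff_C_mul]
    simp only [map_add, ← map_ofNat C, coeff_C_mul, coeff_iterate_theta, coeff_theta]
    push_cast
    linear_combination 625 * coeff_I0_succ n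

def uDeriv (L : ℚ⟦X⟧) : Derivation ℚ ℚ⟦X⟧ ℚ⟦X⟧ := L⁻¹ • theta

theorem uDeriv_apply (L f : ℚ⟦X⟧) : uDeriv L f = 5 * du L f := by
  rw [uDeriv, Derivation.smul_apply, smul_eq_mul, theta_apply, du]
  ring

theorem five_mul_Xg_one (L : ℚ⟦X⟧) : 5 * Xg L 1 = L⁻¹ * (theta I0 * I0⁻¹ - theta L * L⁻¹) := by
  simp only [Xg, theta_apply]
  ring

theorem uDeriv_inv_mul_I0 (L : ℚ⟦X⟧) : uDeriv L (L⁻¹ * I0) = L⁻¹ * I0 * (5 * Xg L 1) := by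
  have hI0 : I0 * I0⁻¹ = 1 := PowerSeries.mul_inv_cancel I0 (by simp [I0])
  rw [five_mul_Xg_one, uDeriv, Derivation.smul_apply, smul_eq_mul, Derivation.leibniz, theta_inv]
  simp only [smul_eq_mul]
  linear_combination -L⁻¹ ^ 2 * theta I0 * hI0

section

variable {L : ℚ⟦X⟧}

theorem iterate_uDeriv_of_du {s : ℕ → ℚ⟦X⟧}
    (hs : ∀ k, s (k + 2) = du L (s (k + 1))) (k : ℕ) :
    (uDeriv L)^[k] (5 * s 1) = 5 ^ (k + 1) * s (k + 1) := by
  induction k with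
  | zero => simp
  | succ k ih =>
    rw [Function.iterate_succ_apply', ih, Derivation.leibniz, Derivation.leibniz_pow,
      Derivation.map_ofNat, hs, uDeriv_apply]
    simp only [smul_eq_mul]
    ring

theorem theta_L (hL : L ^ 5 * (1 - 5 ^ 5 * X) = 1) : theta L = L ^ 6 - L := by
  have h := congrArg theta hL
  simp only [Derivation.leibniz, Derivation.leibniz_pow, map_sub, Derivation.map_ofNat,
    Derivation.map_one_eq_zero, smul_eq_mul, nsmul_eq_mul, theta_X] at h
  have h5 : (5 : ℚ⟦X⟧) * (L ^ 4 * theta L * (1 - 5 ^ 5 * X) - 5 ^ 5 * X * L ^ 5) = 0 := by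
    linear_combination h
  have h' := (mul_eq_zero.mp h5).resolve_left (by rw [← map_ofNat C 5]; simp)
  linear_combination L * h' - (theta L + L) * hL

theorem theta_eq_smul_uDeriv (hc : constantCoeff L = 1) : theta = L • uDeriv L := by
  rw [uDeriv, smul_smul, PowerSeries.mul_inv_cancel L (by simp [hc]), one_smul]

theorem uDeriv_L (hc : constantCoeff L = 1) (hL : L ^ 5 * (1 - 5 ^ 5 * X) = 1) :
    uDeriv L L = L ^ 5 - 1 := by
  rw [uDeriv, Derivation.smul_apply, smul_eq_mul, theta_L hL]
  linear_combination (L ^ 5 - 1) * PowerSeries.mul_inv_cancel L (by simp [hc])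

theorem five_mul_Zg_one (hc : constantCoeff L = 1) (hL : L ^ 5 * (1 - 5 ^ 5 * X) = 1) :
    5 * Zg L 1 = L ^ 4 := by
  have h5 : (5 : ℚ⟦X⟧) * C (1 / 5 : ℚ) = 1 := by rw [← map_ofNat C, ← map_mul]; norm_num
  have hθ := theta_L hL
  rw [theta_apply] at hθ
  simp only [Zg]
  linear_combination L⁻¹ ^ 2 * hθ + L⁻¹ * h5 +
    (L ^ 4 + L ^ 5 * L⁻¹ - L⁻¹) * PowerSeries.mul_inv_cancel L (by simp [hc])

theorem picardFuchs_uDeriv (hc : constantCoeff L = 1) (hL : L ^ 5 * (1 - 5 ^ 5 * X) = 1) :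
    (uDeriv L)^[4] (L⁻¹ * I0) + 15 * L ^ 3 * (L ^ 5 - 1) * (uDeriv L)^[2] (L⁻¹ * I0)
      + 15 * L ^ 2 * (3 - 11 * L ^ 5 + 8 * L ^ 10) * uDeriv L (L⁻¹ * I0)
      + (-23 * L + 341 * L ^ 6 - 714 * L ^ 11 + 396 * L ^ 16) * (L⁻¹ * I0) = 0 := by
  have hI0 : L * (L⁻¹ * I0) = I0 := by
    rw [← mul_assoc, PowerSeries.mul_inv_cancel L (by simp [hc]), one_mul]
  have hconv := Derivation.picardFuchs_change_of_variables theta (uDeriv L)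
    (theta_eq_smul_uDeriv hc) (uDeriv_L hc hL) (g := L⁻¹ * I0)
  rw [hI0] at hconv
  have hL5 : L ^ 5 ≠ 0 := pow_ne_zero 5 fun h => by simp [h] at hc
  refine (mul_eq_zero.mp ?_).resolve_left hL5
  linear_combination -hconv + L ^ 5 * I0_picardFuchs - (theta^[4] I0 + 10 * theta^[3] I0
    + 35 * theta^[2] I0 + 50 * theta I0 + 24 * I0) * hL

theorem Xg_picardFuchs (hc : constantCoeff L = 1) (hL : L ^ 5 * (1 - 5 ^ 5 * X) = 1) :
    625 * (Xg L 4 + 4 * Xg L 1 * Xg L 3 + 3 * Xg L 2 ^ 2 + 6 * Xg L 1 ^ 2 * Xg L 2 + Xg L 1 ^ 4)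
      + 375 * L ^ 3 * (L ^ 5 - 1) * (Xg L 2 + Xg L 1 ^ 2)
      + 75 * L ^ 2 * (3 - 11 * L ^ 5 + 8 * L ^ 10) * Xg L 1
      + (-23 * L + 341 * L ^ 6 - 714 * L ^ 11 + 396 * L ^ 16) = 0 := by
  have hg := uDeriv_inv_mul_I0 L
  have hX := iterate_uDeriv_of_du (s := Xg L) fun _ => rfl
  have hX1 : uDeriv L (5 * Xg L 1) = 5 ^ 2 * Xg L 2 := hX 1
  have hPF := picardFuchs_uDeriv hc hL
  rw [Derivation.iterate_four_eq_mul_of_apply_eq_mul _ hg,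
    Derivation.iterate_two_eq_mul_of_apply_eq_mul _ hg, hg, hX1, hX 2, hX 3] at hPF
  have hg0 : L⁻¹ * I0 ≠ 0 := fun h => by simpa [hc, I0] using congrArg constantCoeff h
  refine (mul_eq_zero.mp ?_).resolve_left hg0
  linear_combination hPF

theorem Zg_two_three_four_eq (hc : constantCoeff L = 1) (hL : L ^ 5 * (1 - 5 ^ 5 * X) = 1) :
    25 * Zg L 2 = 4 * L ^ 3 * (L ^ 5 - 1) ∧
      125 * Zg L 3 = 4 * L ^ 2 * (L ^ 5 - 1) * (8 * L ^ 5 - 3) ∧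
      625 * Zg L 4 = 4 * L * (L ^ 5 - 1) * (96 * L ^ 10 - 77 * L ^ 5 + 6) := by
  have hZ := iterate_uDeriv_of_du (s := Zg L) fun _ => rfl
  rw [five_mul_Zg_one hc hL] at hZ
  have h1 : uDeriv L (L ^ 4) = 5 ^ 2 * Zg L 2 := hZ 1
  have h2 := hZ 2
  have h3 := hZ 3
  simp only [Function.iterate_succ_apply', Function.iterate_zero_apply, Derivation.leibniz,
    Derivation.leibniz_pow, map_add, map_sub, map_zero, Derivation.map_natCast,
    Derivation.map_one_eq_zero, smul_eq_mul, nsmul_eq_mul, uDeriv_L hc hL] at h1 h2 h3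
  exact ⟨by linear_combination -h1, by linear_combination -h2, by linear_combination -h3⟩

end

/-- The second Yamaguchi–Yau identity:
`𝒳₄ = -4𝒳𝒳₃ - 3𝒳₂² - 6𝒳²𝒳₂ - 𝒳⁴ - (15/4)(𝒵₂𝒳² + 𝒵₂𝒳₂ + 𝒵₃𝒳)
      - (23/24)𝒵₄ + (29/9)𝒵₁²𝒵₂ - (65/72)𝒵₁𝒵₃ - (3/4)𝒵₂²`. -/
theorem statement5 (L : PowerSeries ℚ)
    (hc : PowerSeries.constantCoeff L = 1)
    (hL : L ^ 5 * (1 - 5 ^ 5 * PowerSeries.X) = 1) :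
    Xg L 4 =
      -4 * Xg L 1 * Xg L 3 - 3 * (Xg L 2) ^ 2 - 6 * (Xg L 1) ^ 2 * Xg L 2 - (Xg L 1) ^ 4
        - PowerSeries.C (15 / 4 : ℚ) *
            (Zg L 2 * (Xg L 1) ^ 2 + Zg L 2 * Xg L 2 + Zg L 3 * Xg L 1)
        - PowerSeries.C (23 / 24 : ℚ) * Zg L 4
        + PowerSeries.C (29 / 9 : ℚ) * (Zg L 1) ^ 2 * Zg L 2
        - PowerSeries.C (65 / 72 : ℚ) * Zg L 1 * Zg L 3
        - PowerSeries.C (3 / 4 : ℚ) * (Zg L 2) ^ 2 := by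
  have hX := Xg_picardFuchs hc hL
  have hZ1 := five_mul_Zg_one hc hL
  obtain ⟨hZ2, hZ3, hZ4⟩ := Zg_two_three_four_eq hc hL
  -- the constants `C (a / b)` become honest fractions only in the fraction field
  apply IsFractionRing.injective ℚ⟦X⟧ (FractionRing ℚ⟦X⟧)
  set φ := algebraMap ℚ⟦X⟧ (FractionRing ℚ⟦X⟧)
  have : CharZero (FractionRing ℚ⟦X⟧) :=
    charZero_of_injective_algebraMap (algebraMap ℚ (FractionRing ℚ⟦X⟧)).injective
  apply_fun φ at hX hZ1 hZ2 hZ3 hZ4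
  have hC (a : ℚ) : φ (C a) = a := eq_ratCast (φ.comp C) a
  simp only [map_add, map_sub, map_mul, map_pow, map_neg, map_ofNat, map_one, map_zero, hC]
    at hX hZ1 hZ2 hZ3 hZ4 ⊢
  rw [show φ (Zg L 1) = φ L ^ 4 / 5 by linear_combination hZ1 / 5,
    show φ (Zg L 2) = 4 * φ L ^ 3 * (φ L ^ 5 - 1) / 25 by linear_combination hZ2 / 25,
    show φ (Zg L 3) = 4 * φ L ^ 2 * (φ L ^ 5 - 1) * (8 * φ L ^ 5 - 3) / 125 by
      linear_combination hZ3 / 125,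
    show φ (Zg L 4) = 4 * φ L * (φ L ^ 5 - 1) * (96 * φ L ^ 10 - 77 * φ L ^ 5 + 6) / 625 by
      linear_combination hZ4 / 625]
  push_cast
  linear_combination hX / 625

end
end

section
/- Let K := ℚ(t, 𝔮) with derivation δ := (𝔮/5)·d/d𝔮 (fixing t), and set L := t𝔮/(5(1+𝔮)). Define r₀ := 1, r₁ := (1 − 𝔮/12)/(t𝔮), r₂ := (1 − (13/12)𝔮 − (287/288)𝔮²)/(t²𝔮²), and θ₀ := (1+𝔮)²/(t𝔮²), θ₁ := (1+𝔮)²(12 − 25𝔮)/(12 t² 𝔮³), θ₂ := (1+𝔮)²(288 − 1176𝔮 + 625𝔮²)/(288 t³ 𝔮⁴), with θ₋₁ := 0. Then for each k = 0, 1, 2 the identity δ(θ_{k−1}) + (L − t/5)·θ_k + ((1+𝔮)/(5𝔮²))·r_k = 0 holds in K. (These identities encode the differential equation (z·q·d/dq + L_α − t/5)·R⁴_{ᾱ}(z) + (I₀/5)·R_{0,ᾱ}(z) = 0 order by order in z, and verify the paper's explicit formulas Ψ^{4α} = ((1+𝔮)/t)·I₀, (R₁)^{4α} = ((1+𝔮)(12−25𝔮)/(12t²𝔮))·I₀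 and (R₂)^{4α} = ((1+𝔮)(288−1176𝔮+625𝔮²)/(288t³𝔮²))·I₀ for the special row of the R-matrix.) -/
/-!
`δ` is a derivation of `K`, so with `δ t = 0` and `δ 𝔮 = 𝔮/5` the quotient and power rules give
`δ θ₀` and `δ θ₁` in closed form. Since `L − t/5 = −t/(5(1+𝔮))`, each of the three identities then
becomes an identity of rational functions in `t` and `𝔮`.
-/

theorem Derivation.map_ofNat_s13 {R A M : Type*} [CommSemiring R] [CommSemiring A] [Algebra R A]
    [AddCommMonoid M] [Module A M] [Module R M] (D : Derivation R A M) (n : ℕ) [n.AtLeastTwo] :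
    D (no_index (OfNat.ofNat n : A)) = 0 := by
  simpa using D.map_natCast (OfNat.ofNat n)

def Derivation.ofAddLeibniz {A : Type*} [CommRing A] (δ : A → A)
    (hadd : ∀ a b, δ (a + b) = δ a + δ b) (hleib : ∀ a b, δ (a * b) = δ a * b + a * δ b) :
    Derivation ℤ A A :=
  Derivation.mk' (AddMonoidHom.mk' δ hadd).toIntLinearMap fun a b => by
    simp [hleib, smul_eq_mul, mul_comm, add_comm]

@[simp]
theorem Derivation.coe_ofAddLeibniz {A : Type*} [CommRing A] (δ : A → A)
    (hadd : ∀ a b, δ (a + b) = δ a + δ b) (hleib : ∀ a b, δ (a * b) = δ a * b + a * δ b) :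
    ⇑(Derivation.ofAddLeibniz δ hadd hleib) = δ :=
  rfl

section EulerDerivation

variable {K : Type*} [Field K] [CharZero K] (D : Derivation ℤ K K) {t q : K}

theorem Derivation.apply_theta₀ (ht : t ≠ 0) (hq : q ≠ 0) (hDt : D t = 0) (hDq : D q = q / 5) :
    D ((1 + q) ^ 2 / (t * q ^ 2)) = -2 * (1 + q) / (5 * t * q ^ 2) := by
  simp only [Derivation.leibniz_div, Derivation.leibniz, Derivation.leibniz_pow, map_add,
    Derivation.map_one_eq_zero, hDt, hDq, smul_eq_mul, nsmul_eq_mul]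
  field_simp
  ring

theorem Derivation.apply_theta₁ (ht : t ≠ 0) (hq : q ≠ 0) (hDt : D t = 0) (hDq : D q = q / 5) :
    D ((1 + q) ^ 2 * (12 - 25 * q) / (12 * t ^ 2 * q ^ 3))
      = (1 + q) * (19 * q - 18) / (30 * t ^ 2 * q ^ 3) := by
  simp only [Derivation.leibniz_div, Derivation.leibniz, Derivation.leibniz_pow, map_add,
    map_sub, Derivation.map_one_eq_zero, Derivation.map_ofNat_s13, hDt, hDq, smul_eq_mul,
    nsmul_eq_mul]
  field_simp
  ring

end EulerDerivation

theorem eigenvalue_sub_eq {K : Type*} [Field K] [CharZero K] {t q : K} (h1q : 1 + q ≠ 0) :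
    t * q / (5 * (1 + q)) - t / 5 = -t / (5 * (1 + q)) := by
  field_simp
  ring

/-- In `K = ℚ(t, 𝔮)` with the derivation `δ = (𝔮/5)·d/d𝔮`
(characterized by additivity, the Leibniz rule, `δ t = 0`, `δ 𝔮 = 𝔮/5`), set
`L := t𝔮/(5(1+𝔮))`, `r₀ = 1`, `r₁ = (1 − 𝔮/12)/(t𝔮)`,
`r₂ = (1 − (13/12)𝔮 − (287/288)𝔮²)/(t²𝔮²)`, and
`θ₋₁ = 0`, `θ₀ = (1+𝔮)²/(t𝔮²)`, `θ₁ = (1+𝔮)²(12 − 25𝔮)/(12t²𝔮³)`,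
`θ₂ = (1+𝔮)²(288 − 1176𝔮 + 625𝔮²)/(288t³𝔮⁴)`.  Then for each `k = 0, 1, 2` one has
`δ(θ_{k−1}) + (L − t/5)·θ_k + ((1+𝔮)/(5𝔮²))·r_k = 0`. -/
theorem statement13 {K : Type*} [Field K] [CharZero K] (t qm : K)
    (ht : t ≠ 0) (hqm : qm ≠ 0) (h1q : 1 + qm ≠ 0)
    (δ : K → K)
    (hadd : ∀ a b : K, δ (a + b) = δ a + δ b)
    (hleib : ∀ a b : K, δ (a * b) = δ a * b + a * δ b)
    (hδt : δ t = 0) (hδq : δ qm = qm / 5) :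
    (δ 0 + (t * qm / (5 * (1 + qm)) - t / 5) * ((1 + qm) ^ 2 / (t * qm ^ 2))
        + (1 + qm) / (5 * qm ^ 2) * 1 = 0) ∧
    (δ ((1 + qm) ^ 2 / (t * qm ^ 2))
        + (t * qm / (5 * (1 + qm)) - t / 5) *
            ((1 + qm) ^ 2 * (12 - 25 * qm) / (12 * t ^ 2 * qm ^ 3))
        + (1 + qm) / (5 * qm ^ 2) * ((1 - qm / 12) / (t * qm)) = 0) ∧
    (δ ((1 + qm) ^ 2 * (12 - 25 * qm) / (12 * t ^ 2 * qm ^ 3))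
        + (t * qm / (5 * (1 + qm)) - t / 5) *
            ((1 + qm) ^ 2 * (288 - 1176 * qm + 625 * qm ^ 2) / (288 * t ^ 3 * qm ^ 4))
        + (1 + qm) / (5 * qm ^ 2) *
            ((1 - 13 / 12 * qm - 287 / 288 * qm ^ 2) / (t ^ 2 * qm ^ 2)) = 0) := by
  set D := Derivation.ofAddLeibniz δ hadd hleib
  have hDt : D t = 0 := hδt
  have hDq : D qm = qm / 5 := hδq
  have hθ₀ : δ ((1 + qm) ^ 2 / (t * qm ^ 2)) = _ := D.apply_theta₀ ht hqm hDt hDq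
  have hθ₁ : δ ((1 + qm) ^ 2 * (12 - 25 * qm) / (12 * t ^ 2 * qm ^ 3)) = _ :=
    D.apply_theta₁ ht hqm hDt hDq
  have hδ0 : δ 0 = 0 := D.map_zero
  rw [hδ0, hθ₀, hθ₁, eigenvalue_sub_eq h1q]
  refine ⟨?_, ?_, ?_⟩ <;> field_simp <;> ring
end
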